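/- arXiv:2410.11968 — 7 statements merged into one kernel-verified Lean document; each statement's English description precedes it below -/
import Mathlib

section
/- Let a, b, d be positive integers with gcd(a,b)=1. Write d = λab + s with 0 ≤ s < ab. Then the number of solutions (m_a, m_b) ∈ ℕ² of d = m_a·a + m_b·b equals λ + den(s), where den(s) ∈ {0,1} is 1 if s is representable as a nonnegative integer combination of a and b, and 0 otherwise. -/
/-!
Among the representations `d = x * a + y * b` at most one has `x < b`, since `x` is then
determined by `x * a ≡ d [MOD b]`; for `a * b ≤ d` there is exactly one, by inverting `a`
modulo `b`. Every other representation comes from one of `d - a * b` by `x ↦ x + b`, so adding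
`a * b` to `d` adds exactly one representation. Below `a * b` every representation has `x < b`.
-/

def representations (a b d : ℕ) : Set (ℕ × ℕ) :=
  {p | d = p.1 * a + p.2 * b}

section

variable {a b d : ℕ}

theorem representations_finite (ha : 0 < a) (hb : 0 < b) :
    (representations a b d).Finite := by
  refine (Set.finite_Iic d |>.prod (Set.finite_Iic d)).subset fun p (hp : d = _) => ?_
  have hx : p.1 ≤ p.1 * a := Nat.le_mul_of_pos_right _ ha
  have hy : p.2 ≤ p.2 * b := Nat.le_mul_of_pos_right _ hb
  exact ⟨show p.1 ≤ d by omega, show p.2 ≤ d by omega⟩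

theorem eq_of_mem_representations_of_fst_lt (hab : Nat.Coprime a b) {p q : ℕ × ℕ}
    (hp : p ∈ representations a b d) (hq : q ∈ representations a b d)
    (hpb : p.1 < b) (hqb : q.1 < b) : p = q := by
  have hpq : p.1 * a + p.2 * b = q.1 * a + q.2 * b := hp.symm.trans hq
  have hmod : p.1 * a ≡ q.1 * a [MOD b] := by
    simpa only [Nat.ModEq, Nat.add_mul_mod_self_right] using congrArg (· % b) hpq
  have hfst : p.1 = q.1 :=
    (Nat.ModEq.cancel_right_of_coprime (Nat.coprime_comm.mp hab) hmod).eq_of_lt_of_lt hpb hqb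
  have hsnd : p.2 * b = q.2 * b := by
    rw [hfst] at hpq
    omega
  exact Prod.ext hfst (Nat.eq_of_mul_eq_mul_right (by omega) hsnd)

theorem exists_mem_representations_fst_lt (hb : 0 < b) (hab : Nat.Coprime a b)
    (hd : a * b ≤ d) : ∃ p ∈ representations a b d, p.1 < b := by
  have : NeZero b := ⟨hb.ne'⟩
  set x := ((d : ZMod b) * (a : ZMod b)⁻¹).val
  have hxb : x < b := ZMod.val_lt _
  have hmod : x * a ≡ d [MOD b] := by
    rw [← ZMod.natCast_eq_natCast_iff]
    push_cast
    rw [ZMod.natCast_zmod_val, mul_assoc, ZMod.inv_mul_of_unit _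
      ((ZMod.isUnit_iff_coprime a b).mpr hab), mul_one]
  have hle : x * a ≤ d := (Nat.mul_le_mul_right a hxb.le).trans (Nat.mul_comm b a ▸ hd)
  obtain ⟨y, hy⟩ := (Nat.modEq_iff_dvd' hle).mp hmod
  exact ⟨(x, y), show d = x * a + y * b by rw [mul_comm y]; omega, hxb⟩

theorem ncard_representations_add_mul (ha : 0 < a) (hb : 0 < b) (hab : Nat.Coprime a b) :
    (representations a b (d + a * b)).ncard = (representations a b d).ncard + 1 := by
  obtain ⟨p₀, hp₀, hp₀b⟩ :=
    exists_mem_representations_fst_lt hb hab (Nat.le_add_left (a * b) d)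
  have hshift : Function.Injective fun p : ℕ × ℕ => (p.1 + b, p.2) := fun p q h => by
    simp only [Prod.mk.injEq, Nat.add_right_cancel_iff] at h
    exact Prod.ext h.1 h.2
  have hsplit : representations a b (d + a * b) =
      insert p₀ ((fun p : ℕ × ℕ => (p.1 + b, p.2)) '' representations a b d) := by
    ext ⟨x, y⟩
    simp only [Set.mem_insert_iff, Set.mem_image, Prod.exists, Prod.mk.injEq]
    constructor
    · intro hxy
      rcases lt_or_ge x b with hxb | hbx
      · exact Or.inl (eq_of_mem_representations_of_fst_lt hab hxy hp₀ hxb hp₀b)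
      · obtain ⟨x', rfl⟩ := Nat.exists_eq_add_of_le' hbx
        refine Or.inr ⟨x', y, ?_, rfl, rfl⟩
        change d + a * b = (x' + b) * a + y * b at hxy
        change d = x' * a + y * b
        linarith
    · rintro (rfl | ⟨x', y, hxy, rfl, rfl⟩)
      · exact hp₀
      · change d = x' * a + y * b at hxy
        change d + a * b = (x' + b) * a + y * b
        rw [hxy]
        ring
  have hp₀_notMem : p₀ ∉ (fun p : ℕ × ℕ => (p.1 + b, p.2)) '' representations a b d := by
    rintro ⟨p, -, rfl⟩
    exact absurd hp₀b (by simp)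
  rw [hsplit, Set.ncard_insert_of_notMem hp₀_notMem ((representations_finite ha hb).image _),
    Set.ncard_image_of_injective _ hshift]

theorem ncard_representations_mul_add (ha : 0 < a) (hb : 0 < b) (hab : Nat.Coprime a b)
    (l s : ℕ) :
    (representations a b (l * (a * b) + s)).ncard = l + (representations a b s).ncard := by
  induction l with
  | zero => simp
  | succ l ih =>
    rw [add_mul, one_mul, add_right_comm, ncard_representations_add_mul ha hb hab, ih]
    ring

open Classical in
theorem ncard_representations_of_lt (hab : Nat.Coprime a b) {s : ℕ} (hs : s < a * b) :
    (representations a b s).ncard = if ∃ ma mb : ℕ, s = ma * a + mb * b then 1 else 0 := by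
  have hfst : ∀ p ∈ representations a b s, p.1 < b := fun p (hp : s = _) => by
    by_contra! hbp
    have : a * b ≤ p.1 * a := Nat.mul_comm a b ▸ Nat.mul_le_mul_right a hbp
    omega
  split_ifs with h
  · obtain ⟨ma, mb, hm⟩ := h
    have hmem : (ma, mb) ∈ representations a b s := hm
    rw [Set.ncard_eq_one]
    exact ⟨(ma, mb), Set.eq_singleton_iff_unique_mem.mpr ⟨hmem, fun p hp =>
      eq_of_mem_representations_of_fst_lt hab hp hmem (hfst p hp) (hfst _ hmem)⟩⟩
  · have hempty : representations a b s = ∅ :=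
      Set.eq_empty_of_forall_notMem fun p hp => h ⟨p.1, p.2, hp⟩
    rw [hempty, Set.ncard_empty]

end

open Classical in
theorem stmt_0_general (a b d l s : ℕ) (ha : 0 < a) (hb : 0 < b)
    (hab : Nat.gcd a b = 1) (hds : d = l * (a * b) + s) (hs : s < a * b) :
    Set.ncard {p : ℕ × ℕ | d = p.1 * a + p.2 * b} =
      l + (if ∃ ma mb : ℕ, s = ma * a + mb * b then 1 else 0) := by
  subst hds
  rw [← ncard_representations_of_lt hab hs]
  exact ncard_representations_mul_add ha hb hab l s

open Classical in
/-- The denumerant `den(d;a,b)` (number of `(m_a, m_b) ∈ ℕ²` with `d = m_a·a + m_b·b`)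
satisfies `den(d;a,b) = λ + den(s;a,b)` where `d = λ·a·b + s`, `0 ≤ s < a·b`, and
`den(s;a,b) ∈ {0,1}` is `1` exactly when `s` is representable. -/
theorem stmt_0 (a b d l s : ℕ) (ha : 0 < a) (hb : 0 < b) (hd : 0 < d)
    (hab : Nat.gcd a b = 1) (hds : d = l * (a * b) + s) (hs : s < a * b) :
    Set.ncard {p : ℕ × ℕ | d = p.1 * a + p.2 * b} =
      l + (if ∃ ma mb : ℕ, s = ma * a + mb * b then 1 else 0) :=
  stmt_0_general a b d l s ha hb hab hds hs
end

section
/- Let a, b be coprime positive integers, q a positive integer, and d > ab(q−1). Define ε = [a ∣ d] + [b ∣ d] (indicator sum). Then min(q − 1 + ε, den(d; a, b)) = q − 1 + ε. -/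
/-!
Let `m₀ < b` and `n₀ < a` be the least residues with `m₀ a ≡ d (mod b)` and `n₀ b ≡ d (mod a)`. Then
`ab ∣ d - m₀ a - n₀ b`, say `d = m₀ a + n₀ b + K ab` with `K ∈ ℤ`, and the pairs
`(m₀ + i b, n₀ + j a)` with `i + j = K` are `K + 1` distinct representations of `d`.
If `b ∣ d` then `m₀ = 0`, and if `a ∣ d` then `n₀ = 0`; hence `m₀ a + n₀ b ≤ (2 - ε) ab`, and
`ab (q - 1) < d ≤ (K + 2 - ε) ab` gives `q - 1 + ε ≤ K + 1`.
-/

noncomputable def den (d a b : ℕ) : ℕ := Set.ncard {p : ℕ × ℕ | d = p.1 * a + p.2 * b}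

lemma finite_setOf_eq_mul_add_mul {a b : ℕ} (ha : 0 < a) (hb : 0 < b) (d : ℕ) :
    {p : ℕ × ℕ | d = p.1 * a + p.2 * b}.Finite := by
  refine (Set.finite_Iic (d, d)).subset ?_
  rintro ⟨x, y⟩ h
  simp only [Set.mem_ofPred_eq] at h
  exact ⟨by nlinarith, by nlinarith⟩

lemma succ_le_den {a b : ℕ} (ha : 0 < a) (hb : 0 < b) (m n K : ℕ) :
    K + 1 ≤ den (m * a + n * b + K * (a * b)) a b := by
  rw [← Finset.Nat.card_antidiagonal K, den, ← Set.ncard_coe_finset]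
  refine Set.ncard_le_ncard_of_injOn (fun ij => (m + ij.1 * b, n + ij.2 * a)) ?_ ?_
    (finite_setOf_eq_mul_add_mul ha hb _)
  · rintro ⟨i, j⟩ hij
    simp only [Finset.mem_coe, Finset.HasAntidiagonal.mem_antidiagonal] at hij
    simp only [Set.mem_ofPred_eq, ← hij]
    ring
  · rintro ⟨i, j⟩ _ ⟨i', j'⟩ _ h
    simp only [Prod.mk.injEq, Nat.add_left_cancel_iff] at h
    rw [Nat.mul_right_cancel hb h.1, Nat.mul_right_cancel ha h.2]

lemma toNat_succ_le_den {a b d m n : ℕ} (ha : 0 < a) (hb : 0 < b) {K : ℤ}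
    (h : (d : ℤ) = m * a + n * b + K * (a * b)) : (K + 1).toNat ≤ den d a b := by
  rcases lt_or_ge K 0 with hK | hK
  · simp [Int.toNat_eq_zero.2 (by omega : K + 1 ≤ 0)]
  · lift K to ℕ using hK
    obtain rfl : d = m * a + n * b + K * (a * b) := by exact_mod_cast h
    simpa using succ_le_den ha hb m n K

lemma exists_lt_mul_modEq {a b : ℕ} (hb : 0 < b) (hab : a.Coprime b) (d : ℕ) :
    ∃ m < b, m * a ≡ d [MOD b] := by
  have : NeZero b := ⟨hb.ne'⟩
  refine ⟨((d : ZMod b) * (a : ZMod b)⁻¹).val, ZMod.val_lt _, ?_⟩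
  rw [← ZMod.natCast_eq_natCast_iff]
  push_cast
  rw [ZMod.natCast_val, ZMod.cast_id, mul_assoc, mul_comm _ (a : ZMod b),
    ZMod.coe_mul_inv_eq_one a hab, mul_one]

lemma mul_dvd_sub_mul_sub_mul {a b d m n : ℕ} (hab : a.Coprime b) (hm : m * a ≡ d [MOD b])
    (hn : n * b ≡ d [MOD a]) : (a * b : ℤ) ∣ d - m * a - n * b := by
  refine (Nat.isCoprime_iff_coprime.2 hab).mul_dvd ?_ ?_
  · simpa [sub_right_comm] using (Nat.modEq_iff_dvd.1 hn).sub (dvd_mul_left (a : ℤ) m)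
  · simpa using (Nat.modEq_iff_dvd.1 hm).sub (dvd_mul_left (b : ℤ) n)

lemma mul_add_ite_dvd_mul_le {a b d m : ℕ} (hab : a.Coprime b) (hm : m < b)
    (hmd : m * a ≡ d [MOD b]) : m * a + (if b ∣ d then 1 else 0) * (a * b) ≤ a * b := by
  split_ifs with hbd
  · have hbm : b ∣ m := hab.symm.dvd_of_dvd_mul_right
      (Nat.modEq_zero_iff_dvd.1 (hmd.trans (Nat.modEq_zero_iff_dvd.2 hbd)))
    simp [Nat.eq_zero_of_dvd_of_lt hbm hm]
  · nlinarith

lemma sub_one_add_ite_le_den {a b q d : ℕ} (ha : 0 < a) (hb : 0 < b) (hab : a.Coprime b)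
    (hd : a * b * (q - 1) < d) :
    q - 1 + ((if a ∣ d then 1 else 0) + (if b ∣ d then 1 else 0)) ≤ den d a b := by
  obtain ⟨m, hmb, hm⟩ := exists_lt_mul_modEq hb hab d
  obtain ⟨n, hna, hn⟩ := exists_lt_mul_modEq ha (Nat.Coprime.symm hab) d
  obtain ⟨K, hK⟩ := mul_dvd_sub_mul_sub_mul hab hm hn
  have hma := mul_add_ite_dvd_mul_le hab hmb hm
  have hnb := mul_add_ite_dvd_mul_le (Nat.Coprime.symm hab) hna hn
  have hdK : (d : ℤ) = m * a + n * b + K * (a * b) := by linear_combination hK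
  have hbound : ((q - 1 + ((if a ∣ d then 1 else 0) + (if b ∣ d then 1 else 0)) : ℕ) : ℤ) ≤
      K + 1 := by
    generalize (if a ∣ d then 1 else 0) = ea at *
    generalize (if b ∣ d then 1 else 0) = eb at *
    have hmul : (a * b : ℤ) * (q - 1 : ℕ) < (a * b) * (K + 2 - ea - eb) := by
      zify at hd hma hnb
      linarith
    have := lt_of_mul_lt_mul_left hmul (by positivity)
    push_cast
    linarith
  exact (by omega : _ ≤ (K + 1).toNat).trans (toNat_succ_le_den ha hb hdK)

theorem stmt_4_general (a b q d : ℕ) (ha : 0 < a) (hb : 0 < b) (hab : Nat.gcd a b = 1)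
    (hd : a * b * (q - 1) < d) :
    min (q - 1 + ((if a ∣ d then 1 else 0) + (if b ∣ d then 1 else 0)))
        (Set.ncard {p : ℕ × ℕ | d = p.1 * a + p.2 * b}) =
      q - 1 + ((if a ∣ d then 1 else 0) + (if b ∣ d then 1 else 0)) := by
  exact min_eq_left (sub_one_add_ite_le_den ha hb hab hd)

/-- If `d > ab(q−1)` and `ε = [a∣d] + [b∣d]`, then
`min(q − 1 + ε, den(d;a,b)) = q − 1 + ε`. -/
theorem stmt_4 (a b q d : ℕ) (ha : 0 < a) (hb : 0 < b) (hab : Nat.gcd a b = 1)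
    (hq : 2 ≤ q) (hd : a * b * (q - 1) < d) :
    min (q - 1 + ((if a ∣ d then 1 else 0) + (if b ∣ d then 1 else 0)))
        (Set.ncard {p : ℕ × ℕ | d = p.1 * a + p.2 * b}) =
      q - 1 + ((if a ∣ d then 1 else 0) + (if b ∣ d then 1 else 0)) :=
  stmt_4_general a b q d ha hb hab hd
end

section
/- Let a, b be coprime positive integers, q ≥ 2 an integer, and d a positive integer with d ≤ ab(q−1). Then den(d; a, b) ≤ q − 1 + [a ∣ d] + [b ∣ d], so that min(q − 1 + [a∣d] + [b∣d], den(d; a, b)) = den(d; a, b). -/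
theorem ncard_le_of_forall_mod_eq_of_le_mul {T : Set ℕ} {b n r : ℕ}
    (hmod : ∀ x ∈ T, x % b = r) (hle : ∀ x ∈ T, x ≤ b * n) :
    T.ncard ≤ n + if r = 0 then 1 else 0 := by
  have hinj : Set.InjOn (· / b) T := fun x hx y hy hxy => by
    rw [← Nat.div_add_mod x b, ← Nat.div_add_mod y b, hmod x hx, hmod y hy]
    exact congrArg (b * · + r) hxy
  have hrange : (· / b) '' T ⊆ ↑(Finset.range (n + if r = 0 then 1 else 0)) := by
    rintro _ ⟨x, hx, rfl⟩
    have hdiv : x / b ≤ n := Nat.div_le_of_le_mul (hle x hx)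
    split_ifs with hr
    · simpa using Nat.lt_succ_of_le hdiv
    · have hlt : b * (x / b) < b * n := by
        have := Nat.div_add_mod x b
        have := hle x hx
        have := hmod x hx
        omega
      simpa using Nat.lt_of_mul_lt_mul_left hlt
  calc T.ncard = ((· / b) '' T).ncard := hinj.ncard_image.symm
    _ ≤ _ := Set.ncard_le_ncard hrange (Finset.finite_toSet _)
    _ = _ := by rw [Set.ncard_coe_finset, Finset.card_range]

namespace representations

variable {a b d : ℕ}

theorem injOn_fst (hb : 0 < b) : Set.InjOn Prod.fst (representations a b d) := by
  intro p hp p' hp' h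
  have hsnd : p.2 * b = p'.2 * b := by
    have := hp.symm.trans hp'
    rw [h] at this
    omega
  exact Prod.ext h (Nat.eq_of_mul_eq_mul_right hb hsnd)

theorem fst_mod_eq (hab : a.Coprime b) {p p' : ℕ × ℕ} (hp : p ∈ representations a b d)
    (hp' : p' ∈ representations a b d) : p.1 % b = p'.1 % b := by
  have hd : ∀ q ∈ representations a b d, q.1 * a ≡ d [MOD b] := fun q hq => by
    rw [hq]
    exact (Nat.modEq_iff_dvd' (Nat.le_add_right _ _)).mpr (by simp)
  exact Nat.ModEq.cancel_right_of_coprime hab.symm ((hd p hp).trans (hd p' hp').symm)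

theorem fst_le_mul (ha : 0 < a) {n : ℕ} (hd : d ≤ a * b * n) {p : ℕ × ℕ}
    (hp : p ∈ representations a b d) : p.1 ≤ b * n := by
  refine Nat.le_of_mul_le_mul_right ?_ ha
  calc p.1 * a ≤ d := hp ▸ Nat.le_add_right _ _
    _ ≤ b * n * a := by rw [mul_comm a, mul_right_comm] at hd; exact hd

theorem ncard_le (ha : 0 < a) (hb : 0 < b) (hab : a.Coprime b) {n : ℕ} (hd : d ≤ a * b * n) :
    (representations a b d).ncard ≤ n + if b ∣ d then 1 else 0 := by
  rcases (representations a b d).eq_empty_or_nonempty with hempty | ⟨p₀, hp₀⟩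
  · simp [hempty]
  have hfst := ncard_le_of_forall_mod_eq_of_le_mul (T := Prod.fst '' representations a b d)
    (r := p₀.1 % b) (n := n) (by rintro _ ⟨p, hp, rfl⟩; exact fst_mod_eq hab hp hp₀)
    (by rintro _ ⟨p, hp, rfl⟩; exact fst_le_mul ha hd hp)
  have hclass : p₀.1 % b = 0 → b ∣ d := fun h => by
    rw [hp₀]
    exact dvd_add (Dvd.dvd.mul_right (Nat.dvd_of_mod_eq_zero h) a) (dvd_mul_left b _)
  rw [(injOn_fst hb).ncard_image] at hfst
  refine hfst.trans (Nat.add_le_add_left ?_ n)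
  split_ifs <;> simp_all

end representations

theorem stmt_5_general (a b q d : ℕ) (ha : 0 < a) (hb : 0 < b) (hab : Nat.gcd a b = 1)
    (hd : d ≤ a * b * (q - 1)) :
    Set.ncard {p : ℕ × ℕ | d = p.1 * a + p.2 * b} ≤
        q - 1 + ((if a ∣ d then 1 else 0) + (if b ∣ d then 1 else 0)) ∧
      min (q - 1 + ((if a ∣ d then 1 else 0) + (if b ∣ d then 1 else 0)))
          (Set.ncard {p : ℕ × ℕ | d = p.1 * a + p.2 * b}) =
        Set.ncard {p : ℕ × ℕ | d = p.1 * a + p.2 * b} := by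
  have hle : (representations a b d).ncard ≤
      q - 1 + ((if a ∣ d then 1 else 0) + (if b ∣ d then 1 else 0)) :=
    (representations.ncard_le ha hb hab hd).trans (by split_ifs <;> omega)
  exact ⟨hle, min_eq_right hle⟩

/-- If `d ≤ ab(q−1)` then `den(d;a,b) ≤ q − 1 + [a∣d] + [b∣d]`, hence
`min(q − 1 + [a∣d] + [b∣d], den(d;a,b)) = den(d;a,b)`. -/
theorem stmt_5 (a b q d : ℕ) (ha : 0 < a) (hb : 0 < b) (hab : Nat.gcd a b = 1)
    (hq : 2 ≤ q) (hd0 : 0 < d) (hd : d ≤ a * b * (q - 1)) :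
    Set.ncard {p : ℕ × ℕ | d = p.1 * a + p.2 * b} ≤
        q - 1 + ((if a ∣ d then 1 else 0) + (if b ∣ d then 1 else 0)) ∧
      min (q - 1 + ((if a ∣ d then 1 else 0) + (if b ∣ d then 1 else 0)))
          (Set.ncard {p : ℕ × ℕ | d = p.1 * a + p.2 * b}) =
        Set.ncard {p : ℕ × ℕ | d = p.1 * a + p.2 * b} :=
  stmt_5_general a b q d ha hb hab hd
end

section
/- Let q ≥ 2 and let a, b be coprime integers with 2 ≤ a < b. Define, for an integer a₂ with max(0, ⌊(d−1−a(q−1))/b⌋)+1 ≤ a₂ ≤ min(⌊(d−1)/(a+b)⌋, q−1), the function L̃(a₂) = (q − ⌊(d−1−b·a₂)/a⌋)(q − a₂). Then L̃(a₂) − L̃(a₂−1) ≥ (q − a₂ + 1)(⌊(b−1)/a⌋ − 1) + 1 > 0; in particular L̃ is strictly increasing on this range. -/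
/-!
Write `n = q - a₂`, `f₁ = ⌊(d-1-b a₂)/a⌋` and `f₀ = ⌊(d-1-b(a₂-1))/a⌋`. The increment is
`(f₀ - f₁)(n + 1) - (q - f₁)`. Superadditivity of the floor gives `f₀ - f₁ ≥ ⌊(b-1)/a⌋`, and
`a₂ (a + b) ≤ d - 1` gives `f₁ ≥ a₂`, i.e. `q - f₁ ≤ n`; together these yield the bound.
-/

lemma ediv_add_ediv_pred_le_add_ediv {m b a : ℤ} (ha : 0 < a) :
    m / a + (b - 1) / a ≤ (m + b) / a :=
  (Int.ediv_add_ediv_le_add_ediv ha).trans (Int.ediv_le_ediv ha (by omega))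

lemma increment_ge {q x f₀ f₁ k : ℤ} (hxq : x ≤ q + 1) (hxf : x ≤ f₁) (hk : f₁ + k ≤ f₀) :
    (q - f₁) * (q - x) - (q - f₀) * (q - (x - 1)) ≥ (q - x + 1) * (k - 1) + 1 := by
  have hgap : 0 ≤ (q - x + 1) * (f₀ - f₁ - k) := mul_nonneg (by omega) (by omega)
  linarith

theorem stmt_10_general (q a b d : ℤ) (ha : 2 ≤ a) (hab : a < b) :
    ∀ a₂ : ℤ, max 0 ((d - 1 - a * (q - 1)) / b) + 1 ≤ a₂ →
      a₂ ≤ min ((d - 1) / (a + b)) (q - 1) →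
      ((q - (d - 1 - b * a₂) / a) * (q - a₂)
          - (q - (d - 1 - b * (a₂ - 1)) / a) * (q - (a₂ - 1))
        ≥ (q - a₂ + 1) * ((b - 1) / a - 1) + 1) ∧
      (q - a₂ + 1) * ((b - 1) / a - 1) + 1 > 0 := by
  intro a₂ hlo hhi
  have ha0 : 0 < a := by omega
  have ha₂_pos : 1 ≤ a₂ := le_trans (by simp) hlo
  have ha₂_le_q : a₂ ≤ q - 1 := hhi.trans (min_le_right _ _)
  have hmul : a₂ * (a + b) ≤ d - 1 :=
    (Int.le_ediv_iff_mul_le (by omega)).mp (hhi.trans (min_le_left _ _))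
  have hk : 1 ≤ (b - 1) / a := (Int.le_ediv_iff_mul_le ha0).mpr (by omega)
  have hf₁ : a₂ ≤ (d - 1 - b * a₂) / a := (Int.le_ediv_iff_mul_le ha0).mpr (by linarith)
  have hf₀ : (d - 1 - b * a₂) / a + (b - 1) / a ≤ (d - 1 - b * (a₂ - 1)) / a := by
    have := ediv_add_ediv_pred_le_add_ediv (m := d - 1 - b * a₂) (b := b) ha0
    rwa [show d - 1 - b * a₂ + b = d - 1 - b * (a₂ - 1) by ring] at this
  refine ⟨increment_ge (by omega) hf₁ hf₀, ?_⟩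
  have := mul_nonneg (by omega : (0 : ℤ) ≤ q - a₂ + 1) (by omega : (0 : ℤ) ≤ (b - 1) / a - 1)
  omega

/-- Strict increase of `L̃(a₂) = (q − ⌊(d−1−b·a₂)/a⌋)(q − a₂)` on the range
`max(0, ⌊(d−1−a(q−1))/b⌋)+1 ≤ a₂ ≤ min(⌊(d−1)/(a+b)⌋, q−1)`:
the increment is at least `(q − a₂ + 1)(⌊(b−1)/a⌋ − 1) + 1 > 0`. -/
theorem stmt_10 (q a b d : ℤ) (hq : 2 ≤ q) (ha : 2 ≤ a) (hab : a < b)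
    (hcop : IsCoprime a b) (hd : 0 < d) :
    ∀ a₂ : ℤ, max 0 ((d - 1 - a * (q - 1)) / b) + 1 ≤ a₂ →
      a₂ ≤ min ((d - 1) / (a + b)) (q - 1) →
      ((q - (d - 1 - b * a₂) / a) * (q - a₂)
          - (q - (d - 1 - b * (a₂ - 1)) / a) * (q - (a₂ - 1))
        ≥ (q - a₂ + 1) * ((b - 1) / a - 1) + 1) ∧
      (q - a₂ + 1) * ((b - 1) / a - 1) + 1 > 0 :=
  stmt_10_general q a b d ha hab
end

section
/- Let a, b be coprime positive integers with a ≥ 1, and q ≥ 2, and d ≥ bq an integer with d = λab + s, 0 ≤ s < ab. Write i_max + 1 = λ + den(s;a,b) − [a∣d] − [b∣d]. Then i_max + 1 ∈ {⌊(d−b)/(ab)⌋, ⌊(d−b)/(ab)⌋ + 1}. -/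
/-!
Since `s < ab` and `gcd(a, b) = 1`, the number `s` has at most one representation
`s = m a + n b`: reducing mod `a` pins down `n < a`. So `den(s; a, b) ∈ {0, 1}`, and it equals `1`
whenever `a ∣ s` or `b ∣ s`, while `a` and `b` cannot both divide a nonzero `s < ab`. Since
`[a ∣ d] = [a ∣ s]` and `[b ∣ d] = [b ∣ s]`, a case split on `s < b` against
`⌊(d - b)/(ab)⌋ = λ - [s < b]` finishes the proof.
-/

section

variable {a b s : ℕ}

theorem subsingleton_setOf_eq_mul_add_mul (hab : a.Coprime b) (hs : s < a * b) :
    {p : ℕ × ℕ | s = p.1 * a + p.2 * b}.Subsingleton := by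
  have snd_lt {m n : ℕ} (h : s = m * a + n * b) : n < a :=
    Nat.lt_of_mul_lt_mul_right (a := b) (by nlinarith)
  rintro ⟨m, n⟩ (h : s = m * a + n * b) ⟨m', n'⟩ (h' : s = m' * a + n' * b)
  have hmod : n * b ≡ n' * b [MOD a] := by
    have : m * a + n * b ≡ m' * a + n' * b [MOD a] := h ▸ h' ▸ rfl
    simpa [Nat.ModEq, Nat.add_mod, Nat.mul_mod_left] using this
  have hn : n = n' := ((hmod.cancel_right_of_coprime hab).eq_of_lt_of_lt
    (snd_lt h) (snd_lt h'))
  subst hn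
  have hm : m * a = m' * a := by omega
  have ha : 0 < a := Nat.pos_of_ne_zero (by rintro rfl; simp at hs)
  simp [Nat.eq_of_mul_eq_mul_right ha hm]

theorem ncard_setOf_eq_mul_add_mul_eq_one (hab : a.Coprime b) (hs : s < a * b) {p : ℕ × ℕ}
    (hp : s = p.1 * a + p.2 * b) : {p : ℕ × ℕ | s = p.1 * a + p.2 * b}.ncard = 1 :=
  Set.ncard_eq_one.mpr ⟨p, (subsingleton_setOf_eq_mul_add_mul hab hs).eq_singleton_of_mem hp⟩

theorem ncard_setOf_eq_mul_add_mul_eq_zero (hsb : s < b) (hna : ¬ a ∣ s) :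
    {p : ℕ × ℕ | s = p.1 * a + p.2 * b}.ncard = 0 := by
  convert Set.ncard_empty (ℕ × ℕ)
  refine Set.eq_empty_iff_forall_notMem.mpr ?_
  rintro ⟨m, n⟩ (h : s = m * a + n * b)
  obtain rfl : n = 0 := by
    by_contra hn
    nlinarith [Nat.pos_of_ne_zero hn]
  exact hna ⟨m, by simp [h, mul_comm]⟩

open Classical in
theorem ncard_setOf_eq_mul_add_mul_sub_dvd_mem (hab : a.Coprime b) (hs : s < a * b) :
    let e : ℤ := {p : ℕ × ℕ | s = p.1 * a + p.2 * b}.ncard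
      - (if a ∣ s then 1 else 0) - (if b ∣ s then 1 else 0) + (if s < b then 1 else 0)
    e = 0 ∨ e = 1 := by
  have hle : {p : ℕ × ℕ | s = p.1 * a + p.2 * b}.ncard ≤ 1 :=
    have := (subsingleton_setOf_eq_mul_add_mul hab hs).finite.to_subtype
    Set.ncard_le_one_iff_subsingleton.mpr (subsingleton_setOf_eq_mul_add_mul hab hs)
  by_cases hs0 : s = 0
  · subst hs0
    have hb : 0 < b := Nat.pos_of_ne_zero (by rintro rfl; simp at hs)
    simp [ncard_setOf_eq_mul_add_mul_eq_one hab hs (p := (0, 0)) (by simp), hb]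
  by_cases ha : a ∣ s
  · have hnb : ¬ b ∣ s := fun hb =>
      hs0 (Nat.eq_zero_of_dvd_of_lt (hab.mul_dvd_of_dvd_of_dvd ha hb) hs)
    have := ncard_setOf_eq_mul_add_mul_eq_one hab hs (p := (s / a, 0)) (by simp [Nat.div_mul_cancel ha])
    by_cases hsb : s < b <;> simp [ha, hnb, hsb, this]
  by_cases hb : b ∣ s
  · have hsb : ¬ s < b := fun h => hs0 (Nat.eq_zero_of_dvd_of_lt hb h)
    have := ncard_setOf_eq_mul_add_mul_eq_one hab hs (p := (0, s / b)) (by simp [Nat.div_mul_cancel hb])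
    simp [ha, hb, hsb, this]
  by_cases hsb : s < b
  · simp [ha, hb, hsb, ncard_setOf_eq_mul_add_mul_eq_zero hsb ha]
  · simp only [ha, hb, hsb, if_false]
    omega

end

theorem Nat.sub_div_add_ite_lt {b c d l s : ℕ} (hds : d = l * c + s) (hs : s < c) (hbc : b ≤ c)
    (hbd : b ≤ d) : (d - b) / c + (if s < b then 1 else 0) = l := by
  have hc : 0 < c := by omega
  split_ifs with hsb
  · obtain ⟨l, rfl⟩ : ∃ l', l = l' + 1 := Nat.exists_eq_succ_of_ne_zero (by rintro rfl; omega)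
    have : d - b = (c + s - b) + c * l := by rw [hds]; ring_nf; omega
    rw [this, Nat.add_mul_div_left _ _ hc, Nat.div_eq_of_lt (by omega)]
    omega
  · have : d - b = (s - b) + c * l := by rw [hds]; ring_nf; omega
    rw [this, Nat.add_mul_div_left _ _ hc, Nat.div_eq_of_lt (by omega)]
    omega

open Classical in
theorem stmt_15_general (a b q d lam s : ℕ)
    (hcop : Nat.gcd a b = 1) (hq : 2 ≤ q) (hd : b * q ≤ d)
    (hds : d = lam * (a * b) + s) (hs : s < a * b) :
    ((lam : ℤ) + Set.ncard {p : ℕ × ℕ | s = p.1 * a + p.2 * b}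
        - (if a ∣ d then 1 else 0) - (if b ∣ d then 1 else 0)
          = ((d - b) / (a * b) : ℕ)) ∨
    ((lam : ℤ) + Set.ncard {p : ℕ × ℕ | s = p.1 * a + p.2 * b}
        - (if a ∣ d then 1 else 0) - (if b ∣ d then 1 else 0)
          = ((d - b) / (a * b) : ℕ) + 1) := by
  have ha : 0 < a := Nat.pos_of_ne_zero (by rintro rfl; simp at hs)
  have hdvd_iff {c : ℕ} (hc : c ∣ a * b) : c ∣ d ↔ c ∣ s := by
    rw [hds]; exact Nat.dvd_add_right (hc.mul_left lam)
  simp only [hdvd_iff (dvd_mul_right a b), hdvd_iff (dvd_mul_left b a)]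
  have hfloor := Nat.sub_div_add_ite_lt hds hs (Nat.le_mul_of_pos_left b ha)
    (le_trans (Nat.le_mul_of_pos_right b (by omega)) hd)
  have he := ncard_setOf_eq_mul_add_mul_sub_dvd_mem (Nat.coprime_iff_gcd_eq_one.mpr hcop) hs
  simp only at he
  split_ifs at hfloor he ⊢ <;> omega

open Classical in
/-- For `d ≥ bq` written as `d = λ·ab + s` with `0 ≤ s < ab`, the number
`i_max + 1 = λ + den(s;a,b) − [a∣d] − [b∣d]` equals `⌊(d−b)/(ab)⌋` or
`⌊(d−b)/(ab)⌋ + 1`. -/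
theorem stmt_15 (a b q d lam s : ℕ) (ha : 0 < a) (hb : 0 < b)
    (hcop : Nat.gcd a b = 1) (hq : 2 ≤ q) (hd : b * q ≤ d)
    (hds : d = lam * (a * b) + s) (hs : s < a * b) :
    ((lam : ℤ) + Set.ncard {p : ℕ × ℕ | s = p.1 * a + p.2 * b}
        - (if a ∣ d then 1 else 0) - (if b ∣ d then 1 else 0)
          = ((d - b) / (a * b) : ℕ)) ∨
    ((lam : ℤ) + Set.ncard {p : ℕ × ℕ | s = p.1 * a + p.2 * b}
        - (if a ∣ d then 1 else 0) - (if b ∣ d then 1 else 0)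
          = ((d - b) / (a * b) : ℕ) + 1) :=
  stmt_15_general a b q d lam s hcop hq hd hds hs
end

section
/- Let q ≥ 2 and let b be a positive integer, a = 1. For any positive integer d, the set R(d) ∪ T(d) ∪ H(d) (with ℓ, μ_a, μ_b, E_h as below) has cardinality (ℓ+1)(μ_a+1) + (μ_b−ℓ)d − b·C(μ_b+1,2) + b·C(ℓ+1,2) + μ_b + 1 + [b ∣ d], where C(n,2) = n(n−1)/2. Equivalently, the dimension of the weighted projective Reed–Muller code on ℙ(1,1,b) over F_q in degree d is given by this formula. -/
/-!
`R` is a rectangle with `(μ_a + 1)(ℓ + 1)` points, and `T` consists of the rows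
`ℓ + 1 ≤ y ≤ μ_b` of lengths `d - b y`, which a Gauss sum adds up. `H` lies on the line
`x + b y = d` and is parametrised injectively by its height `y ∈ [0, μ_b]`, plus `y = d / b`
when `b ∣ d`, which exceeds `μ_b`. The pieces are disjoint: `R` and `T` are separated by the
height `ℓ`, and every point of `R ∪ T` satisfies `x + b y < d` (on `R` with `y ≥ 1` because
`b ℓ ≤ d - q` and `x ≤ q - 1`).
-/

open Finset

lemma Int.sum_Icc_add_one_id (a c : ℤ) (h : a ≤ c) :
    ∑ y ∈ Icc (a + 1) c, y = (c + 1) * c / 2 - (a + 1) * a / 2 := by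
  induction c, h using Int.leInduction with
  | base => simp
  | succ n _ ih =>
    rw [← insert_Icc_right_eq_Icc_add_one (by omega), sum_insert (by simp), ih]
    have : (n + 1 + 1) * (n + 1) = (n + 1) * n + (n + 1) * 2 := by ring
    rw [this, Int.add_mul_ediv_right _ _ two_ne_zero]
    ring

lemma Int.ncard_Icc (a b : ℤ) : ((Set.Icc a b).ncard : ℤ) = max (b + 1 - a) 0 := by
  rw [← coe_Icc, Set.ncard_coe_finset, Int.card_Icc]; omega

lemma ncard_Icc_union_of_lt (m c : ℤ) (P : Prop) [Decidable P] (hm : 0 ≤ m + 1)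
    (hc : P → m < c) :
    ((Set.Icc 0 m ∪ {y | P ∧ y = c}).ncard : ℤ) = m + 1 + if P then 1 else 0 := by
  by_cases hP : P
  · have : {y | P ∧ y = c} = {c} := by ext; simp [hP]
    rw [this, Set.union_singleton, Set.ncard_insert_of_notMem (by simp [hc hP]), if_pos hP,
      Nat.cast_add, Int.ncard_Icc, max_eq_left (by omega)]
    ring
  · simp [hP, Int.ncard_Icc, hm]

lemma mul_min_ediv_le (b n c : ℤ) (hb : 0 < b) : b * min (n / b) c ≤ n := by
  rw [mul_comm]
  exact (Int.le_ediv_iff_mul_le hb).1 (min_le_left _ _)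

lemma mul_le_of_le_max_min_ediv (b n c y : ℤ) (hb : 0 < b) (hy : 1 ≤ y)
    (hyl : y ≤ max 0 (min c (n / b))) : b * y ≤ n := by
  have : y ≤ n / b := by
    have := min_le_right c (n / b)
    omega
  rw [mul_comm]
  exact (Int.le_ediv_iff_mul_le hb).1 this

lemma min_ediv_lt_ediv_of_dvd (b d c : ℤ) (hb : 0 < b) (h : b ∣ d) :
    min ((d - 1) / b) c < d / b := by
  obtain ⟨k, rfl⟩ := h
  rw [Int.mul_ediv_cancel_left _ hb.ne']
  exact (min_le_left _ _).trans_lt ((Int.ediv_lt_iff_lt_mul hb).2 (by linarith))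

lemma setOf_rect_eq (m n : ℤ) :
    {p : ℤ × ℤ | 0 ≤ p.1 ∧ p.1 ≤ m ∧ 0 ≤ p.2 ∧ p.2 ≤ n} = Set.Icc 0 m ×ˢ Set.Icc 0 n := by
  ext
  simp only [Set.mem_ofPred_eq, Set.mem_prod, Set.mem_Icc, and_assoc]

lemma finite_setOf_rect (m n : ℤ) :
    {p : ℤ × ℤ | 0 ≤ p.1 ∧ p.1 ≤ m ∧ 0 ≤ p.2 ∧ p.2 ≤ n}.Finite :=
  setOf_rect_eq m n ▸ (Set.finite_Icc 0 m).prod (Set.finite_Icc 0 n)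

lemma ncard_setOf_rect (m n : ℤ) (hm : 0 ≤ m + 1) (hn : 0 ≤ n + 1) :
    ({p : ℤ × ℤ | 0 ≤ p.1 ∧ p.1 ≤ m ∧ 0 ≤ p.2 ∧ p.2 ≤ n}.ncard : ℤ) = (m + 1) * (n + 1) := by
  rw [setOf_rect_eq, Set.ncard_prod, Nat.cast_mul, Int.ncard_Icc, Int.ncard_Icc]
  simp [max_eq_left hm, max_eq_left hn]

lemma setOf_subgraph_eq (f : ℤ → ℤ) (lo hi : ℤ) :
    {p : ℤ × ℤ | lo ≤ p.2 ∧ p.2 ≤ hi ∧ 0 ≤ p.1 ∧ p.1 ≤ f p.2} =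
      ↑((Icc lo hi).biUnion fun y => Icc 0 (f y) ×ˢ {y}) := by
  ext ⟨x, y⟩
  simp only [Set.mem_ofPred_eq, coe_biUnion, coe_Icc, coe_product, coe_singleton, Set.mem_iUnion,
    Set.mem_prod, Set.mem_Icc, Set.mem_singleton_iff, exists_prop]
  exact ⟨fun h => ⟨y, ⟨h.1, h.2.1⟩, h.2.2, rfl⟩, fun ⟨_, hi, hx, hy⟩ => hy ▸ ⟨hi.1, hi.2, hx⟩⟩

lemma ncard_setOf_subgraph (f : ℤ → ℤ) (lo hi : ℤ) :
    {p : ℤ × ℤ | lo ≤ p.2 ∧ p.2 ≤ hi ∧ 0 ≤ p.1 ∧ p.1 ≤ f p.2}.ncard =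
      ∑ y ∈ Icc lo hi, (f y + 1).toNat := by
  rw [setOf_subgraph_eq, Set.ncard_coe_finset, card_biUnion]
  · simp
  · intro y _ y' _ hne
    exact disjoint_product.2 (Or.inr (disjoint_singleton.2 hne))

lemma finite_setOf_subgraph (f : ℤ → ℤ) (lo hi : ℤ) :
    {p : ℤ × ℤ | lo ≤ p.2 ∧ p.2 ≤ hi ∧ 0 ≤ p.1 ∧ p.1 ≤ f p.2}.Finite :=
  setOf_subgraph_eq f lo hi ▸ finite_toSet _

lemma ncard_setOf_staircase (b d l m : ℤ) (hb : 0 ≤ b) (hlm : l ≤ m) (hm : b * m ≤ d) :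
    ({p : ℤ × ℤ | l + 1 ≤ p.2 ∧ p.2 ≤ m ∧ 0 ≤ p.1 ∧ p.1 ≤ d - 1 - b * p.2}.ncard : ℤ) =
      (m - l) * d - b * ((m + 1) * m / 2 - (l + 1) * l / 2) := by
  have hrow : ∀ y ∈ Icc (l + 1) m, (((d - 1 - b * y + 1).toNat : ℕ) : ℤ) = d - b * y := by
    intro y hy
    have : b * y ≤ b * m := mul_le_mul_of_nonneg_left (mem_Icc.1 hy).2 hb
    omega
  rw [ncard_setOf_subgraph (fun y => d - 1 - b * y), Nat.cast_sum, sum_congr rfl hrow,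
    sum_sub_distrib, sum_const, Int.card_Icc, ← mul_sum, Int.sum_Icc_add_one_id l m hlm,
    nsmul_eq_mul, Int.toNat_of_nonneg (by omega)]
  ring

lemma setOf_on_line_eq_image (b d m : ℤ) (hm : 0 ≤ m) :
    {p : ℤ × ℤ | ∃ y : ℤ, 1 ≤ y ∧ y ≤ m ∧ p = (d - b * y, y)} ∪ {(d, 0)} ∪
        {p | b ∣ d ∧ p = (0, d / b)} =
      (fun y => (d - b * y, y)) '' (Set.Icc 0 m ∪ {y | b ∣ d ∧ y = d / b}) := by
  ext p
  simp only [Set.mem_union, Set.mem_ofPred_eq, Set.mem_singleton_iff, Set.mem_image,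
    Set.mem_Icc]
  constructor
  · rintro ((⟨y, h1, h2, rfl⟩ | rfl) | ⟨hbd, rfl⟩)
    · exact ⟨y, Or.inl ⟨by omega, h2⟩, rfl⟩
    · exact ⟨0, Or.inl ⟨le_rfl, hm⟩, by simp⟩
    · exact ⟨d / b, Or.inr ⟨hbd, rfl⟩, by rw [Int.mul_ediv_cancel' hbd, sub_self]⟩
  · rintro ⟨y, (⟨h0, hm⟩ | ⟨hbd, rfl⟩), rfl⟩
    · rcases h0.eq_or_lt with rfl | h1
      · exact Or.inl (Or.inr (by simp))
      · exact Or.inl (Or.inl ⟨y, h1, hm, rfl⟩)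
    · exact Or.inr ⟨hbd, by rw [Int.mul_ediv_cancel' hbd, sub_self]⟩

lemma finite_setOf_on_line (b d m : ℤ) (hm : 0 ≤ m) :
    ({p : ℤ × ℤ | ∃ y : ℤ, 1 ≤ y ∧ y ≤ m ∧ p = (d - b * y, y)} ∪ {(d, 0)} ∪
        {p | b ∣ d ∧ p = (0, d / b)}).Finite :=
  setOf_on_line_eq_image b d m hm ▸
    ((Set.finite_Icc _ _).union ((Set.finite_singleton (d / b)).subset fun _ h => h.2)).image _

lemma ncard_setOf_on_line (b d m : ℤ) (hm : 0 ≤ m) (hmd : b ∣ d → m < d / b) :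
    (({p : ℤ × ℤ | ∃ y : ℤ, 1 ≤ y ∧ y ≤ m ∧ p = (d - b * y, y)} ∪ {(d, 0)} ∪
        {p | b ∣ d ∧ p = (0, d / b)}).ncard : ℤ) = m + 1 + if b ∣ d then 1 else 0 := by
  rw [setOf_on_line_eq_image b d m hm,
    Set.ncard_image_of_injective _ fun y y' h => congrArg Prod.snd h]
  exact ncard_Icc_union_of_lt m (d / b) (b ∣ d) (by omega) hmd

lemma disjoint_image_line (b d : ℤ) (S : Set (ℤ × ℤ)) (Y : Set ℤ)
    (hS : ∀ p ∈ S, p.1 + b * p.2 < d) : Disjoint S ((fun y => (d - b * y, y)) '' Y) :=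
  Set.disjoint_left.2 fun p hp ⟨y, _, hpy⟩ => by
    have := hS p hp
    rw [← hpy] at this
    simp only at this
    omega

open Classical in
/-- Dimension of the weighted projective Reed–Muller code on `ℙ(1,1,b)` in degree `d`:
the cardinality of `R(d) ∪ T(d) ∪ H(d)` equals
`(ℓ+1)(μ_a+1) + (μ_b−ℓ)d − b·C(μ_b+1,2) + b·C(ℓ+1,2) + μ_b + 1 + [b ∣ d]`. -/
theorem stmt_16 (q b d : ℤ) (hq : 2 ≤ q) (hb : 1 ≤ b) (hd : 0 < d) :
    let μa : ℤ := min (d - 1) (q - 1)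
    let μb : ℤ := min ((d - 1) / b) (q - 1)
    let l : ℤ := max 0 (min (q - 1) ((d - q) / b))
    let R : Set (ℤ × ℤ) := {p | 0 ≤ p.1 ∧ p.1 ≤ μa ∧ 0 ≤ p.2 ∧ p.2 ≤ l}
    let T : Set (ℤ × ℤ) := {p | l + 1 ≤ p.2 ∧ p.2 ≤ μb ∧ 0 ≤ p.1 ∧ p.1 ≤ d - 1 - b * p.2}
    let H : Set (ℤ × ℤ) :=
      {p | ∃ y : ℤ, 1 ≤ y ∧ y ≤ μb ∧ p = (d - b * y, y)} ∪ {(d, 0)} ∪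
        {p | b ∣ d ∧ p = (0, d / b)}
    ((R ∪ T ∪ H).ncard : ℤ) =
      (l + 1) * (μa + 1) + (μb - l) * d - b * ((μb + 1) * μb / 2)
        + b * ((l + 1) * l / 2) + μb + 1 + (if b ∣ d then 1 else 0) := by
  intro μa μb l R T H
  have hb0 : 0 < b := hb
  have hμb : 0 ≤ μb ∧ b * μb ≤ d - 1 :=
    ⟨le_min (Int.ediv_nonneg (by omega) hb0.le) (by omega), mul_min_ediv_le b _ _ hb0⟩
  have hl : 0 ≤ l ∧ l ≤ μb := ⟨le_max_left _ _, max_le hμb.1 (le_min ((min_le_right _ _).trans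
    (Int.ediv_le_ediv hb0 (by omega))) (min_le_left _ _))⟩
  have hH : H = (fun y => (d - b * y, y)) '' (Set.Icc 0 μb ∪ {y | b ∣ d ∧ y = d / b}) :=
    setOf_on_line_eq_image b d μb hμb.1
  have hRT : Disjoint R T := Set.disjoint_left.2 fun p hR hT => by
    simp only [R, T, Set.mem_ofPred_eq] at hR hT; omega
  have hRTH : Disjoint (R ∪ T) H := hH ▸ disjoint_image_line b d _ _ (by
    rintro ⟨x, y⟩ (⟨-, hx, hy0, hy⟩ | ⟨-, -, -, hx⟩)
    · rcases hy0.eq_or_lt with rfl | hy1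
      · simp only at hx ⊢; omega
      · have := mul_le_of_le_max_min_ediv b (d - q) (q - 1) y hb0 hy1 hy
        simp only at hx ⊢; omega
    · simp only at hx ⊢; omega)
  have hRfin : R.Finite := finite_setOf_rect μa l
  have hTfin : T.Finite := finite_setOf_subgraph (fun y => d - 1 - b * y) (l + 1) μb
  have hHfin : H.Finite := finite_setOf_on_line b d μb hμb.1
  have hRcard : (R.ncard : ℤ) = (μa + 1) * (l + 1) := ncard_setOf_rect μa l (by omega) (by omega)
  have hTcard : (T.ncard : ℤ) = (μb - l) * d - b * ((μb + 1) * μb / 2 - (l + 1) * l / 2) :=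
    ncard_setOf_staircase b d l μb hb0.le hl.2 (by omega)
  have hHcard : (H.ncard : ℤ) = μb + 1 + if b ∣ d then 1 else 0 :=
    ncard_setOf_on_line b d μb hμb.1 (min_ediv_lt_ediv_of_dvd b d _ hb0)
  rw [Set.ncard_union_eq hRTH (hRfin.union hTfin) hHfin, Set.ncard_union_eq hRT hRfin hTfin]
  push_cast
  rw [hRcard, hTcard, hHcard]
  ring
end

section
/- Let q ≥ 2, and let a ≤ b be coprime positive integers, and d a positive integer with d ≤ (a+b)(q−1) and a(q−1) < d. Set ℓ = ⌊(d−1−a(q−1))/b⌋ and μ_b = min(⌊(d−1)/b⌋, q−1). Define L̃(a₂) = q − a₂ for 0 ≤ a₂ ≤ ℓ, and L̃(a₂) = (q − ⌊(d−1−b·a₂)/a⌋)(q − a₂) for ℓ < a₂ ≤ μ_b. Then min over 0 ≤ a₂ ≤ min(μ_b, ⌊(d−1)/(a+b)⌋) of L̃(a₂) equals q − ℓ, provided b > a. -/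
/-!
Write `ℓ = ⌊(d−1−a(q−1))/b⌋`. On `a₂ ≤ ℓ` the function `L̃(a₂) = q − a₂` decreases to `q − ℓ`,
attained at `a₂ = ℓ`. For `a₂ > ℓ` put `k = ⌊(d−1−b·a₂)/a⌋`; the choice of `ℓ` forces `k ≤ q − 2`
and, since `a ≤ b`, `a₂ − ℓ ≤ q − 1 − k`. Hence, with `x = q − k − 1 ≥ 1` and `y = q − a₂ − 1 ≥ 0`,
`L̃(a₂) = (x + 1)(y + 1) ≥ x + y + 1 ≥ q − ℓ`.
-/

section FloorBounds

variable {n a b q a₂ : ℤ}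

lemma ediv_sub_mul_lt_sub_one (ha : 0 < a) (hb : 0 < b) (hl : (n - a * (q - 1)) / b < a₂) :
    (n - b * a₂) / a < q - 1 := by
  have hl_floor := Int.lt_ediv_add_one_mul_self (n - a * (q - 1)) hb
  rw [Int.ediv_lt_iff_lt_mul ha]
  nlinarith

lemma sub_le_sub_one_sub_ediv (ha : 0 < a) (hb : 0 < b) (hab : a ≤ b)
    (hk : (n - b * a₂) / a < q - 1) :
    a₂ - (n - a * (q - 1)) / b ≤ q - 1 - (n - b * a₂) / a := by
  set k := (n - b * a₂) / a
  set l := (n - a * (q - 1)) / b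
  have hk_floor : k * a ≤ n - b * a₂ := Int.ediv_mul_le _ ha.ne'
  have hl_floor : n - a * (q - 1) < (l + 1) * b := Int.lt_ediv_add_one_mul_self _ hb
  have hgap : b * (a₂ - l - 1) < b * (q - 1 - k) := by nlinarith
  linarith [lt_of_mul_lt_mul_left hgap hb.le]

end FloorBounds

lemma sub_le_mul_sub_sub {q k l a₂ : ℤ} (hk : k < q - 1) (ha₂ : a₂ ≤ q - 1)
    (hgap : a₂ - l ≤ q - 1 - k) :
    q - l ≤ (q - k) * (q - a₂) := by
  nlinarith [mul_nonneg (by linarith : (0 : ℤ) ≤ q - k - 1) (by linarith : (0 : ℤ) ≤ q - a₂ - 1)]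

open Classical in
theorem stmt_17_general (q a b d : ℤ) (ha : 1 ≤ a) (hab : a < b)
    (hd1 : a * (q - 1) < d) (hd2 : d ≤ (a + b) * (q - 1)) :
    let l : ℤ := (d - 1 - a * (q - 1)) / b
    let μb : ℤ := min ((d - 1) / b) (q - 1)
    let Lt : ℤ → ℤ := fun a₂ =>
      if a₂ ≤ l then q - a₂ else (q - (d - 1 - b * a₂) / a) * (q - a₂)
    IsLeast (Lt '' Set.Icc 0 (min μb ((d - 1) / (a + b)))) (q - l) := by
  intro l μb Lt
  have ha0 : 0 < a := by omega
  have hb0 : 0 < b := by omega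
  have hl0 : 0 ≤ l := Int.ediv_nonneg (by omega) hb0.le
  have hl_lt : l < q - 1 := (Int.ediv_lt_iff_lt_mul hb0).2 (by linarith)
  have hl_floor : l * b ≤ d - 1 - a * (q - 1) := Int.ediv_mul_le _ hb0.ne'
  refine ⟨⟨l, ⟨hl0, le_min (le_min ?_ hl_lt.le) ?_⟩, by simp [Lt]⟩, ?_⟩
  · exact Int.ediv_le_ediv hb0 (by nlinarith)
  · exact (Int.le_ediv_iff_mul_le (by omega)).2 (by nlinarith)
  rintro _ ⟨a₂, ⟨-, ha₂⟩, rfl⟩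
  have ha₂q : a₂ ≤ q - 1 := ha₂.trans ((min_le_left _ _).trans (min_le_right _ _))
  by_cases hc : a₂ ≤ l
  · simp only [Lt, if_pos hc]
    omega
  · simp only [Lt, if_neg hc]
    have hk := ediv_sub_mul_lt_sub_one ha0 hb0 (not_le.1 hc)
    exact sub_le_mul_sub_sub hk ha₂q (sub_le_sub_one_sub_ediv ha0 hb0 hab.le hk)

open Classical in
/-- For `1 ≤ a < b` coprime, `a(q−1) < d ≤ (a+b)(q−1)`, `ℓ = ⌊(d−1−a(q−1))/b⌋`,
`μ_b = min(⌊(d−1)/b⌋, q−1)`, the minimum of `L̃` over `0 ≤ a₂ ≤ min(μ_b, ⌊(d−1)/(a+b)⌋)`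
is `q − ℓ`. -/
theorem stmt_17 (q a b d : ℤ) (hq : 2 ≤ q) (ha : 1 ≤ a) (hab : a < b)
    (hcop : IsCoprime a b) (hd1 : a * (q - 1) < d) (hd2 : d ≤ (a + b) * (q - 1)) :
    let l : ℤ := (d - 1 - a * (q - 1)) / b
    let μb : ℤ := min ((d - 1) / b) (q - 1)
    let Lt : ℤ → ℤ := fun a₂ =>
      if a₂ ≤ l then q - a₂ else (q - (d - 1 - b * a₂) / a) * (q - a₂)
    IsLeast (Lt '' Set.Icc 0 (min μb ((d - 1) / (a + b)))) (q - l) :=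
  stmt_17_general q a b d ha hab hd1 hd2
end
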